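/- arXiv:math/0510105 — 2 statements merged into one kernel-verified Lean document; each statement's English description precedes it below -/
import Mathlib

section
/- Let F be an exposed face of a nonempty compact convex set C in the dual V* of a finite-dimensional real normed space V. Suppose there exist a sequence (p_n) in V and ε > 0 such that Σ_{i=0}^{n−1} |p_{i+1} − p_i|_F ≤ |p_n − p_0|_F + ε for all n ∈ ℕ, and such that the functions |p_n − ·|_F − |p_n|_F converge pointwise on V to a lower-semicontinuous convex function g. Then there exist a sequence (q_n) in V and ε′ > 0 such that Σ_{i=0}^{n−1} |q_{i+1} − q_i|_C ≤ |q_n − q_0|_C + ε′ for all n ∈ ℕ, and the functions |q_n − ·|_C − |q_n|_C converge pointwise on V to g. -/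
/-!
Write the exposed face as `F = {q ∈ C | q v = c}` with `q v ≤ c` on `C`. Far out in the
direction `-v` the gauge of `C` is that of `F` plus a linear term: the defect
`|y - s v|_C - s c - |y|_F` is nonnegative and tends to `0` as `s → ∞`, by a penalty argument on
the compact set `C`. Lift `p n` to `p n - t n • v` with `t` growing fast enough. The linear terms
telescope, so the almost-geodesic inequality survives up to the summable step defects. The
defect at `p n - x` tends to `0` for `x` in a dense sequence, hence for every `x`, because the
defects are uniformly Lipschitz in `x`.
-/

open Filter Topology Set

noncomputable section

/-- `F` is an exposed face of `C`: the intersection of `C` with a supporting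
hyperplane of `C`. -/
def IsExposedFace {W : Type*} [AddCommGroup W] [Module ℝ W] (C F : Set W) : Prop :=
  ∃ (l : W →ₗ[ℝ] ℝ) (c : ℝ), (∀ x ∈ C, l x ≤ c) ∧ (∃ x ∈ C, l x = c) ∧
    F = {x ∈ C | l x = c}

/-- For a set `K ⊆ V*` and `p ∈ V`, `|p|_K := −inf_{q ∈ K} ⟨q, p⟩`. -/
def mnorm {V : Type*} [NormedAddCommGroup V] [NormedSpace ℝ V]
    (K : Set (V →L[ℝ] ℝ)) (p : V) : ℝ :=
  - sInf ((fun q : V →L[ℝ] ℝ => q p) '' K)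

open scoped NNReal

theorem exists_seq_le_sub_and_le (a b : ℕ → ℝ) :
    ∃ t : ℕ → ℝ, (∀ n, a n ≤ t (n + 1) - t n) ∧ ∀ n, b n ≤ t n := by
  let t : ℕ → ℝ := fun n => Nat.rec (b 0) (fun n tn => max (tn + a n) (b (n + 1))) n
  refine ⟨t, fun n => ?_, fun n => ?_⟩
  · have : t n + a n ≤ t (n + 1) := le_max_left _ _
    linarith
  · cases n with
    | zero => exact le_rfl
    | succ n => exact le_max_right _ _

theorem IsCompact.eventually_lt_add_mul {X : Type*} [TopologicalSpace X] {K : Set X}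
    (hK : IsCompact K) {f h : X → ℝ} (hf : Continuous f) (hh : Continuous h)
    (h_nonneg : ∀ x ∈ K, 0 ≤ h x) {m m' : ℝ} (hm : ∀ x ∈ K, h x = 0 → m ≤ f x)
    (hm' : m' < m) :
    ∀ᶠ s in atTop, ∀ x ∈ K, m' < f x + s * h x := by
  obtain ⟨δ, hδ, hδh⟩ : ∃ δ, 0 < δ ∧ ∀ x ∈ K ∩ f ⁻¹' Iic m', δ ≤ h x :=
    (hK.inter_right (isClosed_Iic.preimage hf)).exists_forall_le' hh.continuousOn
      fun x ⟨hxK, hfx⟩ => (h_nonneg x hxK).lt_of_ne' fun h0 =>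
        (hm x hxK h0).not_gt (lt_of_le_of_lt hfx hm')
  obtain ⟨b, hb⟩ := hK.bddBelow_image hf.continuousOn
  filter_upwards [eventually_ge_atTop 0, eventually_gt_atTop ((m' - b) / δ)] with s hs₀ hs x hx
  by_cases hfx : f x ≤ m'
  · have h1 : m' - b < s * δ := (div_lt_iff₀ hδ).1 hs
    have h2 : s * δ ≤ s * h x := mul_le_mul_of_nonneg_left (hδh x ⟨hx, hfx⟩) hs₀
    linarith [hb (mem_image_of_mem f hx)]
  · linarith [mul_nonneg hs₀ (h_nonneg x hx)]

theorem Dense.tendsto_of_lipschitzWith {ι X α : Type*} [PseudoMetricSpace X]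
    [PseudoMetricSpace α] {l : Filter ι} {f : ι → X → α} {g : X → α} {K : ℝ≥0}
    (hf : ∀ i, LipschitzWith K (f i)) (hg : Continuous g) {s : Set X} (hs : Dense s)
    (h : ∀ x ∈ s, Tendsto (f · x) l (𝓝 (g x))) (x : X) : Tendsto (f · x) l (𝓝 (g x)) :=
  ((LipschitzWith.uniformEquicontinuous f K hf).equicontinuous.isClosed_setOfPred_tendsto
    hg).closure_subset_iff.2 h (hs x)

section mnorm

variable {V : Type*} [NormedAddCommGroup V] [NormedSpace ℝ V] {K : Set (V →L[ℝ] ℝ)}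

theorem neg_apply_le_mnorm (hK : IsCompact K) {q : V →L[ℝ] ℝ} (hq : q ∈ K) (p : V) :
    -q p ≤ mnorm K p :=
  neg_le_neg <| csInf_le
    (hK.bddBelow_image (ContinuousLinearMap.apply ℝ ℝ p).continuous.continuousOn)
    (mem_image_of_mem _ hq)

theorem IsCompact.exists_mnorm_eq (hK : IsCompact K) (hne : K.Nonempty) (p : V) :
    ∃ q ∈ K, mnorm K p = -q p := by
  obtain ⟨q, hq, hmin⟩ :=
    hK.exists_isMinOn hne (ContinuousLinearMap.apply ℝ ℝ p).continuous.continuousOn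
  have hleast : IsLeast ((fun r : V →L[ℝ] ℝ => r p) '' K) (q p) :=
    ⟨mem_image_of_mem _ hq, forall_mem_image.2 hmin⟩
  exact ⟨q, hq, by rw [mnorm, hleast.csInf_eq]⟩

theorem lipschitzWith_mnorm (hK : IsCompact K) (hne : K.Nonempty) {M : ℝ≥0}
    (hM : ∀ q ∈ K, ‖q‖₊ ≤ M) : LipschitzWith M (mnorm K) := by
  refine LipschitzWith.of_le_add_mul M fun a b => ?_
  obtain ⟨q, hq, hqa⟩ := hK.exists_mnorm_eq hne a
  have hqba : q (b - a) ≤ M * dist a b :=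
    calc q (b - a) ≤ ‖q‖ * ‖b - a‖ := (le_abs_self _).trans (q.le_opNorm _)
      _ ≤ M * dist a b := by
        rw [dist_comm, dist_eq_norm]
        exact mul_le_mul_of_nonneg_right (hM q hq) (norm_nonneg _)
  calc mnorm K a = -q b + q (b - a) := by rw [hqa, map_sub]; ring
    _ ≤ mnorm K b + M * dist a b := add_le_add (neg_apply_le_mnorm hK hq b) hqba

end mnorm

section faceDefect

variable {V : Type*} [NormedAddCommGroup V] [NormedSpace ℝ V]

theorem IsExposedFace.exists_eq_sep_apply_eq [FiniteDimensional ℝ V]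
    {C F : Set (V →L[ℝ] ℝ)} (hF : IsExposedFace C F) :
    ∃ (v : V) (c : ℝ), (∀ q ∈ C, q v ≤ c) ∧ F = {q ∈ C | q v = c} ∧ F.Nonempty := by
  obtain ⟨l, c, hle, ⟨q₀, hq₀C, hq₀c⟩, rfl⟩ := hF
  obtain ⟨v, hv⟩ : ∃ v : V, ∀ q : V →L[ℝ] ℝ, l q = q v := by
    let l' : Module.Dual ℝ (Module.Dual ℝ V) :=
      l ∘ₗ (LinearMap.toContinuousLinearMap : Module.Dual ℝ V ≃ₗ[ℝ] _).toLinearMap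
    exact ⟨(Module.evalEquiv ℝ V).symm l', fun q =>
      (Module.apply_evalEquiv_symm_apply ℝ V (q : V →ₗ[ℝ] ℝ) l').symm⟩
  simp only [hv] at hle hq₀c ⊢
  exact ⟨v, c, hle, rfl, q₀, hq₀C, hq₀c⟩

theorem IsCompact.sep_apply_eq {C : Set (V →L[ℝ] ℝ)} (hC : IsCompact C) (v : V) (c : ℝ) :
    IsCompact {q ∈ C | q v = c} :=
  hC.inter_right (isClosed_eq (ContinuousLinearMap.apply ℝ ℝ v).continuous continuous_const)

def faceDefect (C F : Set (V →L[ℝ] ℝ)) (v : V) (c : ℝ) (y : V) (s : ℝ) : ℝ :=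
  mnorm C (y - s • v) - s * c - mnorm F y

variable {C F : Set (V →L[ℝ] ℝ)} {v : V} {c : ℝ}

theorem mnorm_sub_smul_eq (C F : Set (V →L[ℝ] ℝ)) (v : V) (c : ℝ) (y : V) (s : ℝ) :
    mnorm C (y - s • v) = mnorm F y + s * c + faceDefect C F v c y s := by
  unfold faceDefect; ring

theorem faceDefect_nonneg (hC : IsCompact C) (hF : F = {q ∈ C | q v = c}) (hFne : F.Nonempty)
    (y : V) (s : ℝ) : 0 ≤ faceDefect C F v c y s := by
  subst hF
  obtain ⟨q, ⟨hqC, hqv⟩, hq⟩ := (hC.sep_apply_eq v c).exists_mnorm_eq hFne y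
  have := neg_apply_le_mnorm hC hqC (y - s • v)
  rw [map_sub, map_smul, hqv, smul_eq_mul] at this
  unfold faceDefect
  linarith

theorem tendsto_faceDefect_atTop (hC : IsCompact C) (hvC : ∀ q ∈ C, q v ≤ c)
    (hF : F = {q ∈ C | q v = c}) (hFne : F.Nonempty) (y : V) :
    Tendsto (faceDefect C F v c y) atTop (𝓝 0) := by
  refine tendsto_order.2 ⟨fun a ha => Eventually.of_forall fun s =>
    ha.trans_le (faceDefect_nonneg hC hF hFne y s), fun η hη => ?_⟩
  have hFmin : ∀ q ∈ C, c - q v = 0 → -mnorm F y ≤ q y := fun q hqC hqv => by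
    have hqF : q ∈ F := hF ▸ ⟨hqC, by linarith⟩
    linarith [neg_apply_le_mnorm (hF ▸ hC.sep_apply_eq v c) hqF y]
  filter_upwards [hC.eventually_lt_add_mul (f := fun q => q y) (h := fun q => c - q v)
    (ContinuousLinearMap.apply ℝ ℝ y).continuous
    (continuous_const.sub (ContinuousLinearMap.apply ℝ ℝ v).continuous)
    (fun q hq => sub_nonneg.2 (hvC q hq)) hFmin (sub_lt_self _ hη)] with s hs
  obtain ⟨q, hqC, hq⟩ := hC.exists_mnorm_eq (hFne.mono (hF ▸ sep_subset _ _)) (y - s • v)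
  have := hs q hqC
  rw [faceDefect, hq, map_sub, map_smul, smul_eq_mul]
  linarith

theorem lipschitzWith_faceDefect (hC : IsCompact C) (hF : F = {q ∈ C | q v = c})
    (hFne : F.Nonempty) {M : ℝ≥0} (hM : ∀ q ∈ C, ‖q‖₊ ≤ M) (s : ℝ) :
    LipschitzWith (M + M) (faceDefect C F v c · s) := by
  have hCne : C.Nonempty := hFne.mono (hF ▸ sep_subset _ _)
  have hC' := (lipschitzWith_mnorm hC hCne hM).comp
    (IsometryEquiv.subRight (s • v)).isometry.lipschitz
  have hF' := lipschitzWith_mnorm (hF ▸ hC.sep_apply_eq v c) hFne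
    fun q hq => hM q (hF ▸ hq).1
  exact ((hC'.sub (LipschitzWith.const (s * c))).sub hF').weaken (by simp)

theorem sum_mnorm_sub_sub_smul_le (hC : IsCompact C) (hF : F = {q ∈ C | q v = c})
    (hFne : F.Nonempty) (p : ℕ → V) (t : ℕ → ℝ) (n : ℕ) :
    ∑ i ∈ Finset.range n, mnorm C ((p (i + 1) - t (i + 1) • v) - (p i - t i • v))
        - mnorm C ((p n - t n • v) - (p 0 - t 0 • v)) ≤
      ∑ i ∈ Finset.range n, mnorm F (p (i + 1) - p i) - mnorm F (p n - p 0)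
        + ∑ i ∈ Finset.range n, faceDefect C F v c (p (i + 1) - p i) (t (i + 1) - t i) := by
  have hsub : ∀ a b, (p a - t a • v) - (p b - t b • v) = (p a - p b) - (t a - t b) • v :=
    fun a b => by rw [sub_smul]; abel
  simp only [hsub, mnorm_sub_smul_eq C F v c, Finset.sum_add_distrib, ← Finset.sum_mul,
    Finset.sum_range_sub]
  linarith [faceDefect_nonneg hC hF hFne (p n - p 0) (t n - t 0)]

theorem tendsto_faceDefect_of_denseRange (hC : IsCompact C) (hF : F = {q ∈ C | q v = c})
    (hFne : F.Nonempty) {u : ℕ → V} (hu : DenseRange u) {p : ℕ → V} {t : ℕ → ℝ}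
    (ht : ∀ n, ∀ j ≤ n, faceDefect C F v c (p n - u j) (t n) ≤ 1 / (n + 1)) (y : V) :
    Tendsto (fun n => faceDefect C F v c (p n - y) (t n)) atTop (𝓝 0) := by
  obtain ⟨M, hM⟩ := hC.bddAbove_image continuous_nnnorm.continuousOn
  refine hu.tendsto_of_lipschitzWith (f := fun n y => faceDefect C F v c (p n - y) (t n))
    (g := fun _ => 0) (fun n => (lipschitzWith_faceDefect hC hF hFne
      (fun q hq => hM (mem_image_of_mem _ hq)) (t n)).comp
        (IsometryEquiv.subLeft (p n)).isometry.lipschitz)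
    continuous_const (forall_mem_range.2 fun j => ?_) y
  exact tendsto_of_tendsto_of_tendsto_of_le_of_le' tendsto_const_nhds
    tendsto_one_div_add_atTop_nhds_zero_nat
    (Eventually.of_forall fun n => faceDefect_nonneg hC hF hFne _ _)
    ((eventually_ge_atTop j).mono fun n hn => ht n j hn)

end faceDefect

theorem almost_geodesic_lifting_general (V : Type*) [NormedAddCommGroup V] [NormedSpace ℝ V]
    [FiniteDimensional ℝ V]
    (C F : Set (V →L[ℝ] ℝ)) (hCcpt : IsCompact C)
    (hF : IsExposedFace C F)
    (p : ℕ → V) (ε : ℝ) (hε : 0 < ε)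
    (hgeo : ∀ n : ℕ,
      ∑ i ∈ Finset.range n, mnorm F (p (i + 1) - p i) ≤ mnorm F (p n - p 0) + ε)
    (g : V → ℝ)
    (hptwise : ∀ x : V,
      Tendsto (fun n => mnorm F (p n - x) - mnorm F (p n)) atTop (𝓝 (g x))) :
    ∃ (q : ℕ → V) (ε' : ℝ), 0 < ε' ∧
      (∀ n : ℕ,
        ∑ i ∈ Finset.range n, mnorm C (q (i + 1) - q i) ≤ mnorm C (q n - q 0) + ε') ∧
      ∀ x : V, Tendsto (fun n => mnorm C (q n - x) - mnorm C (q n)) atTop (𝓝 (g x)) := by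
  obtain ⟨v, c, hvC, hFC, hFne⟩ := hF.exists_eq_sep_apply_eq
  have hd := tendsto_faceDefect_atTop hCcpt hvC hFC hFne
  obtain ⟨u, hu⟩ := TopologicalSpace.exists_dense_seq V
  choose S hS using fun n => eventually_atTop.1 <|
    (hd (p (n + 1) - p n)).eventually_lt_const (by positivity : 0 < ε / 2 * (1 / 2) ^ n)
  choose R hR using fun n : ℕ => eventually_atTop.1 <| (Finset.Iic n).eventually_all.2
    fun j _ => (hd (p n - u j)).eventually_lt_const (by positivity : (0 : ℝ) < 1 / (n + 1))
  obtain ⟨t, htS, htR⟩ := exists_seq_le_sub_and_le S R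
  refine ⟨fun n => p n - t n • v, 2 * ε, by positivity, fun n => ?_, fun x => ?_⟩
  · have hdefect :
        ∑ i ∈ Finset.range n, faceDefect C F v c (p (i + 1) - p i) (t (i + 1) - t i) ≤ ε :=
      calc _ ≤ ∑ i ∈ Finset.range n, ε / 2 * (1 / 2) ^ i :=
            Finset.sum_le_sum fun i _ => (hS i _ (htS i)).le
        _ = ε / 2 * ∑ i ∈ Finset.range n, (1 / 2 : ℝ) ^ i := (Finset.mul_sum ..).symm
        _ ≤ ε / 2 * 2 := by gcongr; exact sum_geometric_two_le n
        _ = ε := by ring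
    linarith [sum_mnorm_sub_sub_smul_le hCcpt hFC hFne p t n, hgeo n]
  · have hlim := tendsto_faceDefect_of_denseRange hCcpt hFC hFne hu
      fun n j hj => (hR n (t n) (htR n) j (Finset.mem_Iic.2 hj)).le
    have := (hptwise x).add ((hlim x).sub (hlim 0))
    rw [sub_self, add_zero] at this
    refine this.congr fun n => ?_
    rw [sub_right_comm, sub_zero, mnorm_sub_smul_eq C F v c, mnorm_sub_smul_eq C F v c (p n)]
    ring

/-- Lemma on lifting almost-geodesics from an exposed face `F` of a compact convex
set `C ⊆ V*` to `C` itself. -/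
theorem almost_geodesic_lifting (V : Type*) [NormedAddCommGroup V] [NormedSpace ℝ V]
    [FiniteDimensional ℝ V]
    (C F : Set (V →L[ℝ] ℝ)) (hCne : C.Nonempty) (hCcpt : IsCompact C)
    (hCconv : Convex ℝ C) (hF : IsExposedFace C F)
    (p : ℕ → V) (ε : ℝ) (hε : 0 < ε)
    (hgeo : ∀ n : ℕ,
      ∑ i ∈ Finset.range n, mnorm F (p (i + 1) - p i) ≤ mnorm F (p n - p 0) + ε)
    (g : V → ℝ) (hglsc : LowerSemicontinuous g) (hgconv : ConvexOn ℝ Set.univ g)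
    (hptwise : ∀ x : V,
      Tendsto (fun n => mnorm F (p n - x) - mnorm F (p n)) atTop (𝓝 (g x))) :
    ∃ (q : ℕ → V) (ε' : ℝ), 0 < ε' ∧
      (∀ n : ℕ,
        ∑ i ∈ Finset.range n, mnorm C (q (i + 1) - q i) ≤ mnorm C (q n - q 0) + ε') ∧
      ∀ x : V, Tendsto (fun n => mnorm C (q n - x) - mnorm C (q n)) atTop (𝓝 (g x)) :=
  almost_geodesic_lifting_general V C F hCcpt hF p ε hε hgeo g hptwise
end
end

section
/- Let C be a nonempty compact convex subset of the dual V* of a finite-dimensional real normed space V, let F be a nonempty exposed face of C, and let f : V* → ℝ be an affine function with f = 0 on F and f > 0 on C \ F. Let f̂ := f − f(0) be the linear functional on V* with the same gradient, regarded (via the canonical identification V** ≅ V) as an element of V. Then for every r ∈ V, the quantity |λ f̂ + r|_C − |λ f̂ + r|_F tends to 0 as λ → ∞. -/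
open Filter Topology Set

noncomputable section

/-!
On `F` the affine function `f` vanishes, so after removing the common constant `λ f(0)` the
difference of the two norms is `inf_F r − inf_C (λ f + r)`, and it suffices to see that the
penalised infimum `inf_C (λ f + r)` converges to `inf_F r`. Below any level `b < inf_F r`, the
compact set `{q ∈ C | q r ≤ b}` misses `F`, so `f ≥ δ > 0` there, and once `λ δ` exceeds the
bounded deficit of `r` on `C`, the function `λ f + r` stays above `b` on all of `C`.
-/

theorem sInf_image_add_const {α : Type*} {s : Set α} {φ : α → ℝ} (hs : s.Nonempty)
    (hφ : BddBelow (φ '' s)) (c : ℝ) :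
    sInf ((fun x => φ x + c) '' s) = sInf (φ '' s) + c := by
  rw [← image_image (· + c) φ s]
  exact ((OrderIso.addRight c).map_csInf' (hs.image φ) hφ).symm

section Penalty

variable {X : Type*} [TopologicalSpace X] {K : Set X} {g h : X → ℝ}

theorem eventually_forall_le_smul_add (hK : IsCompact K) (hg : ContinuousOn g K)
    (hh : ContinuousOn h K) (hg_nonneg : ∀ x ∈ K, 0 ≤ g x) {b : ℝ}
    (hg_pos : ∀ x ∈ K, h x ≤ b → 0 < g x) :
    ∀ᶠ t : ℝ in atTop, ∀ x ∈ K, b ≤ t * g x + h x := by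
  have hS := hh.lowerSemicontinuousOn.isCompact_inter_preimage_Iic hK b
  obtain ⟨δ, hδ, hδg⟩ :=
    hS.exists_forall_le' (hg.mono inter_subset_left) fun x hx => hg_pos x hx.1 hx.2
  obtain ⟨m, hm⟩ := hK.bddBelow_image hh
  filter_upwards [eventually_ge_atTop 0, eventually_ge_atTop ((b - m) / δ)] with t ht₀ ht x hx
  by_cases hxb : h x ≤ b
  · calc b ≤ t * δ + m := by linarith [(div_le_iff₀ hδ).1 ht]
      _ ≤ t * g x + h x :=
        add_le_add (mul_le_mul_of_nonneg_left (hδg x ⟨hx, hxb⟩) ht₀) (hm (mem_image_of_mem h hx))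
  · calc b ≤ h x := le_of_not_ge hxb
      _ ≤ t * g x + h x := le_add_of_nonneg_left (mul_nonneg ht₀ (hg_nonneg x hx))

theorem tendsto_sInf_image_smul_add {F : Set X} (hK : IsCompact K) (hFK : F ⊆ K)
    (hF : F.Nonempty) (hg : ContinuousOn g K) (hh : ContinuousOn h K)
    (hg_zero : ∀ x ∈ F, g x = 0) (hg_pos : ∀ x ∈ K \ F, 0 < g x) :
    Tendsto (fun t : ℝ => sInf ((fun x => t * g x + h x) '' K)) atTop (𝓝 (sInf (h '' F))) := by
  have hbdd : ∀ t : ℝ, BddBelow ((fun x => t * g x + h x) '' K) := fun t =>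
    hK.bddBelow_image ((continuousOn_const.mul hg).add hh)
  have hle : ∀ t : ℝ, sInf ((fun x => t * g x + h x) '' K) ≤ sInf (h '' F) := fun t =>
    calc sInf ((fun x => t * g x + h x) '' K)
        ≤ sInf ((fun x => t * g x + h x) '' F) :=
          csInf_le_csInf (hbdd t) (hF.image _) (image_mono hFK)
      _ = sInf (h '' F) := by
          congr 1
          exact image_congr fun x hx => by simp [hg_zero x hx]
  refine tendsto_order.2 ⟨fun b hb => ?_, fun b hb => .of_forall fun t => (hle t).trans_lt hb⟩
  obtain ⟨b', hbb', hb'⟩ := exists_between hb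
  have hh_lower : ∀ x ∈ F, sInf (h '' F) ≤ h x := fun x hx =>
    csInf_le ((hK.bddBelow_image hh).mono (image_mono hFK)) (mem_image_of_mem h hx)
  have hg_nonneg : ∀ x ∈ K, 0 ≤ g x := fun x hx => by
    by_cases hxF : x ∈ F
    · exact (hg_zero x hxF).ge
    · exact (hg_pos x ⟨hx, hxF⟩).le
  have hpen := eventually_forall_le_smul_add hK hg hh hg_nonneg (b := b') fun x hx hxb' =>
    hg_pos x ⟨hx, fun hxF => (hb'.trans_le (hh_lower x hxF)).not_ge hxb'⟩
  filter_upwards [hpen] with t ht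
  refine hbb'.trans_le (le_csInf ((hF.mono hFK).image _) ?_)
  rintro _ ⟨x, hx, rfl⟩
  exact ht x hx

end Penalty

theorem mnorm_smul_add_eq {V : Type*} [NormedAddCommGroup V] [NormedSpace ℝ V]
    {K : Set (V →L[ℝ] ℝ)} (hK : K.Nonempty) {f : (V →L[ℝ] ℝ) → ℝ} {u : V}
    (hu : ∀ q : V →L[ℝ] ℝ, q u = f q - f 0) (t : ℝ) (r : V)
    (hbdd : BddBelow ((fun q => t * f q + q r) '' K)) :
    mnorm K (t • u + r) = t * f 0 - sInf ((fun q => t * f q + q r) '' K) := by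
  have hpair : (fun q : V →L[ℝ] ℝ => q (t • u + r)) = fun q => t * f q + q r + -(t * f 0) := by
    ext q
    rw [map_add, map_smul, hu, smul_eq_mul]
    ring
  rw [mnorm, hpair, sInf_image_add_const hK hbdd]
  ring

theorem mnorm_diff_tendsto_zero_general (V : Type*) [NormedAddCommGroup V] [NormedSpace ℝ V]
    (C F : Set (V →L[ℝ] ℝ)) (hCcpt : IsCompact C)
    (hF : IsExposedFace C F) (hFne : F.Nonempty)
    (f : (V →L[ℝ] ℝ) → ℝ)
    (hf0 : ∀ q ∈ F, f q = 0) (hfpos : ∀ q ∈ C \ F, 0 < f q)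
    (fhat : V) (hfhat : ∀ q : V →L[ℝ] ℝ, q fhat = f q - f 0) :
    ∀ r : V,
      Tendsto (fun lam : ℝ => mnorm C (lam • fhat + r) - mnorm F (lam • fhat + r))
        atTop (𝓝 0) := by
  intro r
  have hFC : F ⊆ C := by
    obtain ⟨_, _, -, -, rfl⟩ := hF
    exact sep_subset C _
  have heval : ∀ p : V, Continuous fun q : V →L[ℝ] ℝ => q p := fun p =>
    (ContinuousLinearMap.apply ℝ ℝ p).continuous
  have hf : Continuous f := by
    have hf_eq : f = fun q => q fhat + f 0 := funext fun q => by rw [hfhat]; ring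
    exact hf_eq ▸ (heval fhat).add continuous_const
  have hbdd : ∀ t : ℝ, BddBelow ((fun q => t * f q + q r) '' C) := fun t =>
    hCcpt.bddBelow_image ((continuous_const.mul hf).add (heval r)).continuousOn
  have hF_eq : ∀ t : ℝ, sInf ((fun q => t * f q + q r) '' F) = sInf ((fun q => q r) '' F) :=
    fun t => congrArg sInf <| image_congr fun q hq => by simp [hf0 q hq]
  have hdiff : ∀ t : ℝ, mnorm C (t • fhat + r) - mnorm F (t • fhat + r) =
      sInf ((fun q => q r) '' F) - sInf ((fun q => t * f q + q r) '' C) := fun t => by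
    rw [mnorm_smul_add_eq (hFne.mono hFC) hfhat t r (hbdd t),
      mnorm_smul_add_eq hFne hfhat t r ((hbdd t).mono (image_mono hFC)), hF_eq]
    ring
  have hlim := tendsto_sInf_image_smul_add hCcpt hFC hFne hf.continuousOn (heval r).continuousOn
    hf0 hfpos
  simpa only [hdiff, sub_self] using
    (tendsto_const_nhds (x := sInf ((fun q => q r) '' F))).sub hlim

/-- Let `F` be a nonempty exposed face of a nonempty compact convex set `C ⊆ V*`, and
`f : V* → ℝ` affine with `f = 0` on `F` and `f > 0` on `C \ F`. Let `f̂ ∈ V` represent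
the linear functional `f − f(0)` on `V*` (via `V** ≅ V`). Then for every `r ∈ V`,
`|λ f̂ + r|_C − |λ f̂ + r|_F → 0` as `λ → ∞`. -/
theorem mnorm_diff_tendsto_zero (V : Type*) [NormedAddCommGroup V] [NormedSpace ℝ V]
    [FiniteDimensional ℝ V]
    (C F : Set (V →L[ℝ] ℝ)) (hCne : C.Nonempty) (hCcpt : IsCompact C)
    (hCconv : Convex ℝ C) (hF : IsExposedFace C F) (hFne : F.Nonempty)
    (f : (V →L[ℝ] ℝ) → ℝ)
    (haff : ∃ (l : (V →L[ℝ] ℝ) →ₗ[ℝ] ℝ) (c : ℝ), ∀ q, f q = l q + c)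
    (hf0 : ∀ q ∈ F, f q = 0) (hfpos : ∀ q ∈ C \ F, 0 < f q)
    (fhat : V) (hfhat : ∀ q : V →L[ℝ] ℝ, q fhat = f q - f 0) :
    ∀ r : V,
      Tendsto (fun lam : ℝ => mnorm C (lam • fhat + r) - mnorm F (lam • fhat + r))
        atTop (𝓝 0) :=
  mnorm_diff_tendsto_zero_general V C F hCcpt hF hFne f hf0 hfpos fhat hfhat
end
end
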